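/- Fix a real number t with 0 ≤ t < 3. Then lim_{m→∞} Σ_{k=0}^{m−1} [(5/2)_k · (1−m)_k / ((2−4m)_k · k!)] · t^k = 32/(4−t)^{5/2}; that is, the terminating hypergeometric polynomials ₂F₁(5/2, 1−m; 2−4m; t) converge to (1 − t/4)^{-5/2} as m → ∞. -/

import Mathlib

/-- Rising factorial (Pochhammer symbol) `(a)_n = a (a+1) ⋯ (a+n−1)`. -/
noncomputable def poch (a : ℝ) (n : ℕ) : ℝ := ∏ i ∈ Finset.range n, (a + i)

lemma poch_zero (a : ℝ) : poch a 0 = 1 := by simp [poch]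

lemma poch_succ (a : ℝ) (n : ℕ) : poch a (n + 1) = poch a n * (a + n) := by
  simp [poch, Finset.prod_range_succ]

lemma poch_pos {a : ℝ} (ha : 0 < a) (n : ℕ) : 0 < poch a n := by
  apply Finset.prod_pos
  intro i _
  positivity

lemma poch_bound (n : ℕ) :
    poch (5/2) n ≤ (n.factorial : ℝ) * ((n + 1) * (n + 2) / 2) := by
  induction n with
  | zero => simp [poch_zero]
  | succ n ih =>
    rw [poch_succ, Nat.factorial_succ]
    have h1 : (0:ℝ) < (n.factorial : ℝ) := by positivity
    have h2 : (0:ℝ) ≤ (5/2 : ℝ) + n := by positivity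
    push_cast
    have h3 : (0:ℝ) ≤ (n.factorial : ℝ) * (((n:ℝ)+1) * ((n:ℝ)+2)) := by positivity
    nlinarith [mul_le_mul_of_nonneg_right ih h2, h3]

lemma summable_aux {r : ℝ} (h0 : 0 ≤ r) (h1 : r < 1) :
    Summable (fun k : ℕ => ((k:ℝ) + 1) * ((k:ℝ) + 2) / 2 * r ^ k) := by
  have hr : ‖r‖ < 1 := by rwa [Real.norm_eq_abs, abs_of_nonneg h0]
  have hs2 := summable_pow_mul_geometric_of_norm_lt_one (R := ℝ) 2 hr
  have hs1 := summable_pow_mul_geometric_of_norm_lt_one (R := ℝ) 1 hr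
  have hs0 := summable_geometric_of_norm_lt_one hr
  have := ((hs2.add hs1).add hs0)
  apply Summable.of_nonneg_of_le (fun k => by positivity)
    (fun k => ?_) ((((hs2.add hs1).add hs0).mul_left 2))
  have hk : (0:ℝ) ≤ (k:ℝ) := Nat.cast_nonneg k
  have hp : (0:ℝ) ≤ r ^ k := by positivity
  nlinarith [sq_nonneg ((k:ℝ) - 1), mul_nonneg (mul_nonneg hk hk) hp]

lemma deriv_step (n : ℕ) {y : ℝ} (hy : y < 1) :
    HasDerivAt (fun z : ℝ => poch (5/2) n * (1 - z) ^ (-(5/2 : ℝ) - n))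
      (poch (5/2) (n + 1) * (1 - y) ^ (-(5/2 : ℝ) - (n + 1 : ℕ))) y := by
  have h1 : (0:ℝ) < 1 - y := by linarith
  have hd : HasDerivAt (fun z : ℝ => 1 - z) (-1) y := by
    simpa using (hasDerivAt_id y).const_sub 1
  have h2 := (hd.rpow_const (p := -(5/2 : ℝ) - n) (Or.inl (ne_of_gt h1))).const_mul
    (poch (5/2) n)
  refine h2.congr_deriv ?_
  have he : (-(5/2:ℝ) - ((n : ℕ) + 1 : ℕ)) = (-(5/2:ℝ) - n) - 1 := by push_cast; ring
  rw [he, poch_succ]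
  ring

lemma hasSum_binomial {x : ℝ} (hx0 : 0 ≤ x) (hx1 : x < 1) :
    HasSum (fun k : ℕ => poch (5/2) k / (k.factorial : ℝ) * x ^ k)
      ((1 - x) ^ (-(5/2 : ℝ))) := by
  rcases eq_or_lt_of_le hx0 with h | h
  · -- x = 0
    subst h
    have h0 : ((1:ℝ) - 0) ^ (-(5/2:ℝ)) = 1 := by
      rw [sub_zero, Real.one_rpow]
    rw [h0]
    have := hasSum_single (f := fun k : ℕ => poch (5/2) k / (k.factorial : ℝ) * (0:ℝ) ^ k) 0
      (fun b hb => by simp [zero_pow hb])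
    simpa [poch_zero] using this
  · set s := Set.Icc (0:ℝ) x with hs_def
    have hs : UniqueDiffOn ℝ s := uniqueDiffOn_Icc h
    set f : ℝ → ℝ := fun z => (1 - z) ^ (-(5/2 : ℝ)) with hf_def
    set D : ℕ → ℝ → ℝ := fun n y => poch (5/2) n * (1 - y) ^ (-(5/2:ℝ) - n) with hD_def
    have hmem : ∀ y ∈ s, y < 1 := fun y hy => lt_of_le_of_lt hy.2 hx1
    have hiter : ∀ n, Set.EqOn (iteratedDerivWithin n f s) (D n) s := by
      intro n
      induction n with
      | zero =>
        intro y hy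
        simp only [iteratedDerivWithin_zero, hD_def, hf_def, poch_zero, Nat.cast_zero,
          sub_zero, one_mul]
      | succ n ih =>
        intro y hy
        rw [iteratedDerivWithin_succ, derivWithin_congr ih (ih hy),
          (deriv_step n (hmem y hy)).differentiableAt.derivWithin (hs y hy),
          (deriv_step n (hmem y hy)).deriv]
    have hcd : ∀ n : ℕ, ContDiffOn ℝ n f s := by
      intro n y hy
      have h1 : (1:ℝ) - y ≠ 0 := by have := hmem y hy; intro hc; linarith [hc]
      exact ((Real.contDiffAt_rpow_const_of_ne h1).comp y
        ((contDiff_const.sub contDiff_id).contDiffAt)).contDiffWithinAt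
    have hdiff : ∀ n : ℕ, DifferentiableOn ℝ (iteratedDerivWithin n f s) (Set.Ioo 0 x) := by
      intro n
      have hDn : DifferentiableOn ℝ (D n) (Set.Ioo 0 x) := fun y hy =>
        (deriv_step n (lt_of_lt_of_le hy.2 hx1.le)).differentiableAt.differentiableWithinAt
      exact hDn.congr (fun y hy => hiter n (Set.Ioo_subset_Icc_self hy))
    -- Taylor polynomial is the partial sum
    have htay : ∀ n : ℕ, taylorWithinEval f n s 0 x =
        ∑ k ∈ Finset.range (n + 1), poch (5/2) k / (k.factorial : ℝ) * x ^ k := by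
      intro n
      rw [taylor_within_apply]
      apply Finset.sum_congr rfl
      intro k hk
      have h0s : (0:ℝ) ∈ s := Set.left_mem_Icc.2 h.le
      rw [hiter k h0s]
      simp only [hD_def, sub_zero, Real.one_rpow, smul_eq_mul]
      ring
    -- remainder bound
    have hrem : ∀ n : ℕ, |f x - taylorWithinEval f n s 0 x| ≤
        ((n:ℝ) + 1) * ((n:ℝ) + 2) * ((n:ℝ) + 3) / 2 * x ^ n *
          ((1 - x) ^ (-(7/2 : ℝ)) * x) := by
      intro n
      obtain ⟨x', hx', hR⟩ : ∃ x' ∈ Set.Ioo 0 x, f x - taylorWithinEval f n s 0 x =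
          iteratedDerivWithin (n + 1) f s x' * (x - x') ^ n / (n.factorial : ℝ) * (x - 0) := by
        have := taylor_mean_remainder_cauchy (f := f) (n := n) h.ne
          (by rw [Set.uIcc_of_le h.le]; exact hcd n)
          (by rw [Set.uIcc_of_le h.le, Set.uIoo_of_le h.le]; exact hdiff n)
        rwa [Set.uIcc_of_le h.le, Set.uIoo_of_le h.le] at this
      have hx'1 : (0:ℝ) < 1 - x' := by have h2 := hx'.2; nlinarith
      have hx'x : 1 - x ≤ 1 - x' := by have := hx'.2; linarith
      have h1x : (0:ℝ) < 1 - x := by linarith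
      rw [hiter (n+1) (Set.Ioo_subset_Icc_self hx')] at hR
      rw [hR]
      have hE : (-(5/2:ℝ) - ((n+1:ℕ):ℝ)) = (-(7/2:ℝ)) + (-(n:ℝ)) := by push_cast; ring
      have hsplit : (1 - x') ^ (-(5/2:ℝ) - ((n+1:ℕ):ℝ)) =
          (1 - x') ^ (-(7/2:ℝ)) * ((1 - x')⁻¹) ^ n := by
        rw [hE, Real.rpow_add hx'1]
        congr 1
        rw [Real.rpow_neg hx'1.le, Real.rpow_natCast]
        exact (inv_pow _ _).symm
      have hq0 : 0 ≤ (x - x') / (1 - x') := by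
        apply div_nonneg _ hx'1.le
        linarith [hx'.2]
      have hqx : (x - x') / (1 - x') ≤ x := by
        rw [div_le_iff₀ hx'1]
        nlinarith [hx'.1, hx'.2]
      have hDval : D (n+1) x' * (x - x') ^ n / (n.factorial : ℝ) * (x - 0) =
          (poch (5/2) (n+1) / (n.factorial : ℝ)) * ((x - x') / (1 - x')) ^ n *
            ((1 - x') ^ (-(7/2:ℝ)) * x) := by
        simp only [hD_def, sub_zero]
        rw [hsplit, div_pow, inv_pow]
        have hne : (1 - x') ^ n ≠ 0 := pow_ne_zero _ hx'1.ne'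
        field_simp
      rw [hDval, abs_of_nonneg]
      · have hb1 : poch (5/2) (n+1) / (n.factorial : ℝ) ≤
            ((n:ℝ) + 1) * ((n:ℝ) + 2) * ((n:ℝ) + 3) / 2 := by
          rw [div_le_iff₀ (by positivity : (0:ℝ) < (n.factorial : ℝ))]
          calc poch (5/2) (n+1) ≤ ((n+1).factorial : ℝ) * (((n+1:ℕ):ℝ) + 1) *
                (((n+1:ℕ):ℝ) + 2) / 2 := by
                have := poch_bound (n+1)
                linarith [poch_bound (n+1)]
            _ = ((n:ℝ) + 1) * ((n:ℝ) + 2) * ((n:ℝ) + 3) / 2 * (n.factorial : ℝ) := by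
                rw [Nat.factorial_succ]; push_cast; ring
        have hb2 : ((x - x') / (1 - x')) ^ n ≤ x ^ n := pow_le_pow_left₀ hq0 hqx n
        have hb3 : (1 - x') ^ (-(7/2:ℝ)) ≤ (1 - x) ^ (-(7/2:ℝ)) :=
          Real.rpow_le_rpow_of_nonpos h1x hx'x (by norm_num)
        have hp1 : (0:ℝ) ≤ poch (5/2) (n+1) / (n.factorial : ℝ) := by
          have := poch_pos (by norm_num : (0:ℝ) < 5/2) (n+1)
          positivity
        have hp2 : (0:ℝ) ≤ ((x - x') / (1 - x')) ^ n := by positivity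
        have hp3 : (0:ℝ) ≤ (1 - x') ^ (-(7/2:ℝ)) := Real.rpow_nonneg hx'1.le _
        exact mul_le_mul (mul_le_mul hb1 hb2 hp2 (by positivity))
          (mul_le_mul_of_nonneg_right hb3 h.le) (by positivity)
          (by positivity)
      · have hp1 : (0:ℝ) ≤ poch (5/2) (n+1) := (poch_pos (by norm_num) (n+1)).le
        have hp3 : (0:ℝ) ≤ (1 - x') ^ (-(7/2:ℝ)) := Real.rpow_nonneg hx'1.le _
        have hp2 : (0:ℝ) ≤ ((x - x') / (1 - x')) ^ n := pow_nonneg hq0 n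
        have hpf : (0:ℝ) < (n.factorial : ℝ) := by positivity
        exact mul_nonneg (mul_nonneg (div_nonneg hp1 hpf.le) hp2) (mul_nonneg hp3 h.le)
    -- the error term tends to zero
    have hsum3 : Summable (fun n : ℕ => ((n:ℝ) + 1) * ((n:ℝ) + 2) * ((n:ℝ) + 3) / 2 * x ^ n *
        ((1 - x) ^ (-(7/2 : ℝ)) * x)) := by
      apply Summable.mul_right
      have hx : ‖x‖ < 1 := by rwa [Real.norm_eq_abs, abs_of_nonneg hx0]
      have hs3 := summable_pow_mul_geometric_of_norm_lt_one (R := ℝ) 3 hx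
      have hs2 := summable_pow_mul_geometric_of_norm_lt_one (R := ℝ) 2 hx
      have hs1 := summable_pow_mul_geometric_of_norm_lt_one (R := ℝ) 1 hx
      have hs0 := summable_geometric_of_norm_lt_one hx
      have hbig := ((hs3.add hs2).add hs1).add hs0
      apply Summable.of_nonneg_of_le (fun k => by positivity) (fun k => ?_) (hbig.mul_left 6)
      have hk : (0:ℝ) ≤ (k:ℝ) := Nat.cast_nonneg k
      have hp : (0:ℝ) ≤ x ^ k := by positivity
      have e1 : (0:ℝ) ≤ (k:ℝ)^2 * x ^ k := by positivity
      have e2 : (0:ℝ) ≤ (k:ℝ)^3 * x ^ k := by positivity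
      have e3 : (0:ℝ) ≤ (k:ℝ) * x ^ k := by positivity
      nlinarith [e1, e2, e3, hp]
    have hzero := hsum3.tendsto_atTop_zero
    have htendT : Filter.Tendsto (fun n => taylorWithinEval f n s 0 x)
        Filter.atTop (nhds (f x)) := by
      have := squeeze_zero_norm (fun n => by
        rw [Real.norm_eq_abs, abs_sub_comm]; exact hrem n) hzero
      have h2 : Filter.Tendsto (fun n => f x - (f x - taylorWithinEval f n s 0 x))
          Filter.atTop (nhds (f x - 0)) := by
        exact Filter.Tendsto.sub tendsto_const_nhds (by
          simpa [abs_sub_comm] using (squeeze_zero_norm (fun n => by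
            rw [Real.norm_eq_abs]; exact hrem n) hzero))
      simpa using h2
    -- conclude
    have hsummable : Summable (fun k : ℕ => poch (5/2) k / (k.factorial : ℝ) * x ^ k) := by
      apply Summable.of_nonneg_of_le (fun k => ?_) (fun k => ?_) (summable_aux hx0 hx1)
      · have := (poch_pos (by norm_num : (0:ℝ) < 5/2) k).le
        positivity
      · have h1 := poch_bound k
        have h2 : (0:ℝ) < (k.factorial : ℝ) := by positivity
        have hp : (0:ℝ) ≤ x ^ k := by positivity
        rw [div_mul_eq_mul_div, div_le_iff₀ h2]
        calc poch (5/2) k * x ^ k ≤ ((k.factorial : ℝ) * (((k:ℝ)+1) * ((k:ℝ)+2) / 2)) * x ^ k :=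
              mul_le_mul_of_nonneg_right h1 hp
          _ = ((k:ℝ)+1) * ((k:ℝ)+2) / 2 * x ^ k * (k.factorial : ℝ) := by ring
    have hps := hsummable.hasSum
    have htendS : Filter.Tendsto
        (fun n => ∑ k ∈ Finset.range (n + 1), poch (5/2) k / (k.factorial : ℝ) * x ^ k)
        Filter.atTop (nhds (∑' k, poch (5/2) k / (k.factorial : ℝ) * x ^ k)) :=
      hps.tendsto_sum_nat.comp (Filter.tendsto_add_atTop_nat 1)
    have htendS' : Filter.Tendsto
        (fun n => ∑ k ∈ Finset.range (n + 1), poch (5/2) k / (k.factorial : ℝ) * x ^ k)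
        Filter.atTop (nhds (f x)) := by
      apply htendT.congr
      intro n
      exact htay n
    have heq := tendsto_nhds_unique htendS htendS'
    have : f x = (1 - x) ^ (-(5/2 : ℝ)) := rfl
    rw [this] at heq
    exact heq ▸ hps


/-- The terminating hypergeometric polynomial `₂F₁(5/2, 1−m; 2−4m; t)`. -/
noncomputable def F (m : ℕ) (t : ℝ) : ℝ :=
  ∑ k ∈ Finset.range m,
    poch (5 / 2) k * poch (1 - (m : ℝ)) k / (poch (2 - 4 * (m : ℝ)) k * (Nat.factorial k : ℝ)) *
      t ^ k

/-- For fixed `0 ≤ t < 3`, `lim_{m→∞} ₂F₁(5/2, 1−m; 2−4m; t) = 32/(4−t)^{5/2}`. -/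
theorem F_limit (t : ℝ) (ht0 : 0 ≤ t) (ht : t < 3) :
    Filter.Tendsto (fun m : ℕ => F m t) Filter.atTop
      (nhds (32 / (4 - t) ^ ((5 : ℝ) / 2))) := by
  classical
  set fm : ℕ → ℕ → ℝ := fun m k =>
    poch (5 / 2) k * poch (1 - (m : ℝ)) k / (poch (2 - 4 * (m : ℝ)) k * (Nat.factorial k : ℝ)) *
      t ^ k with hfm_def
  set g : ℕ → ℝ := fun k => poch (5/2) k / (k.factorial : ℝ) * (t/4) ^ k with hg_def
  -- the limit series
  have hx0 : (0:ℝ) ≤ t/4 := by linarith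
  have hx1 : t/4 < 1 := by linarith
  have hg := hasSum_binomial hx0 hx1
  have hval : ((1:ℝ) - t/4) ^ (-(5/2 : ℝ)) = 32 / (4 - t) ^ ((5:ℝ)/2) := by
    have h4 : (0:ℝ) ≤ 4 - t := by linarith
    have h1 : (1:ℝ) - t/4 = (4 - t)/4 := by ring
    rw [h1, Real.rpow_neg (by positivity), Real.div_rpow h4 (by norm_num), inv_div]
    congr 1
    have h2 : (4:ℝ) = (2:ℝ) ^ ((2:ℕ):ℝ) := by
      rw [Real.rpow_natCast]; norm_num
    rw [h2, ← Real.rpow_mul (by norm_num)]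
    have h3 : ((2:ℕ):ℝ) * ((5:ℝ)/2) = ((5:ℕ):ℝ) := by push_cast; ring
    rw [h3, Real.rpow_natCast]
    norm_num
  -- bound for dominated convergence
  have hr0 : (0:ℝ) ≤ t/3 := by linarith
  have hr1 : t/3 < 1 := by linarith
  have hbd_sum := summable_aux hr0 hr1
  -- vanishing of terms beyond the range
  have hvanish : ∀ m : ℕ, 1 ≤ m → ∀ k, m ≤ k → poch (1 - (m:ℝ)) k = 0 := by
    intro m hm k hk
    rw [poch]
    apply Finset.prod_eq_zero (i := m - 1)
    · exact Finset.mem_range.2 (lt_of_lt_of_le (Nat.pred_lt (Nat.one_le_iff_ne_zero.1 hm)) hk)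
    · rw [Nat.cast_sub hm]
      push_cast
      ring
  -- eventual bound
  have h_bound : ∀ᶠ m in Filter.atTop, ∀ k, ‖fm m k‖ ≤ ((k:ℝ)+1) * ((k:ℝ)+2) / 2 * (t/3) ^ k := by
    filter_upwards [Filter.eventually_ge_atTop 1] with m hm k
    have hbdnn : (0:ℝ) ≤ ((k:ℝ)+1) * ((k:ℝ)+2) / 2 * (t/3) ^ k := by positivity
    rcases le_or_gt m k with hmk | hkm
    · simp only [hfm_def, hvanish m hm k hmk]
      simpa using hbdnn
    · -- k < m
      have hA : (0:ℝ) < poch (5/2) k := poch_pos (by norm_num) k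
      have hfac : (0:ℝ) < (k.factorial : ℝ) := by positivity
      have hcast : ∀ i : ℕ, i ∈ Finset.range k → (i:ℝ) + 2 ≤ (m:ℝ) := by
        intro i hi
        have h1 : i + 2 ≤ m := by
          have := Finset.mem_range.1 hi
          omega
        exact_mod_cast h1
      have hBabs : |poch (1 - (m:ℝ)) k| = ∏ i ∈ Finset.range k, ((m:ℝ) - 1 - i) := by
        rw [poch, Finset.abs_prod]
        apply Finset.prod_congr rfl
        intro i hi
        have := hcast i hi
        rw [abs_of_nonpos (by linarith)]
        ring
      have hCabs : |poch (2 - 4*(m:ℝ)) k| = ∏ i ∈ Finset.range k, (4*(m:ℝ) - 2 - i) := by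
        rw [poch, Finset.abs_prod]
        apply Finset.prod_congr rfl
        intro i hi
        have := hcast i hi
        have hm1 : (1:ℝ) ≤ (m:ℝ) := by exact_mod_cast hm
        rw [abs_of_nonpos (by linarith)]
        ring
      have hCpos : (0:ℝ) < ∏ i ∈ Finset.range k, (4*(m:ℝ) - 2 - i) := by
        apply Finset.prod_pos
        intro i hi
        have := hcast i hi
        linarith
      have hkey : |poch (1 - (m:ℝ)) k| ≤ (1/3:ℝ) ^ k * |poch (2 - 4*(m:ℝ)) k| := by
        rw [hBabs, hCabs]
        calc ∏ i ∈ Finset.range k, ((m:ℝ) - 1 - i)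
            ≤ ∏ i ∈ Finset.range k, ((1/3:ℝ) * (4*(m:ℝ) - 2 - i)) := by
              apply Finset.prod_le_prod
              · intro i hi; have := hcast i hi; linarith
              · intro i hi; have := hcast i hi
                have hi0 : (0:ℝ) ≤ (i:ℝ) := Nat.cast_nonneg i
                linarith
          _ = (1/3:ℝ) ^ k * ∏ i ∈ Finset.range k, (4*(m:ℝ) - 2 - i) := by
              rw [Finset.prod_mul_distrib, Finset.prod_const, Finset.card_range]
      have habs : ‖fm m k‖ =
          poch (5/2) k * |poch (1 - (m:ℝ)) k| /
            (|poch (2 - 4*(m:ℝ)) k| * (k.factorial : ℝ)) * t ^ k := by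
        simp only [hfm_def]
        rw [Real.norm_eq_abs, abs_mul, abs_div, abs_mul, abs_mul,
          abs_of_nonneg hA.le, abs_of_nonneg hfac.le, abs_pow, abs_of_nonneg ht0]
      rw [habs]
      have hCne : |poch (2 - 4*(m:ℝ)) k| ≠ 0 := by rw [hCabs]; exact hCpos.ne'
      calc poch (5/2) k * |poch (1 - (m:ℝ)) k| /
            (|poch (2 - 4*(m:ℝ)) k| * (k.factorial : ℝ)) * t ^ k
          ≤ poch (5/2) k * ((1/3:ℝ) ^ k * |poch (2 - 4*(m:ℝ)) k|) /
            (|poch (2 - 4*(m:ℝ)) k| * (k.factorial : ℝ)) * t ^ k := by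
            have ht' : (0:ℝ) ≤ t ^ k := by positivity
            have hden : (0:ℝ) < |poch (2 - 4*(m:ℝ)) k| * (k.factorial : ℝ) := by
              rw [hCabs]; positivity
            gcongr
        _ = poch (5/2) k / (k.factorial : ℝ) * (t/3) ^ k := by
            rw [div_pow]
            field_simp
            rw [one_pow, ← mul_pow]; congr 1; ring
        _ ≤ ((k:ℝ)+1) * ((k:ℝ)+2) / 2 * (t/3) ^ k := by
            apply mul_le_mul_of_nonneg_right _ (by positivity)
            rw [div_le_iff₀ hfac]
            calc poch (5/2) k ≤ (k.factorial : ℝ) * (((k:ℝ)+1) * ((k:ℝ)+2) / 2) := poch_bound k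
              _ = ((k:ℝ)+1) * ((k:ℝ)+2) / 2 * (k.factorial : ℝ) := by ring
  -- termwise limits
  have hab : ∀ k : ℕ, Filter.Tendsto (fun m : ℕ => fm m k) Filter.atTop (nhds (g k)) := by
    intro k
    have hfac : ∀ i : ℕ, Filter.Tendsto
        (fun m : ℕ => (1 - (m:ℝ) + i) / (2 - 4*(m:ℝ) + i)) Filter.atTop (nhds (1/4)) := by
      intro i
      have h1 : Filter.Tendsto (fun m : ℕ => ((1:ℝ) + i)/(m:ℝ) - 1) Filter.atTop
          (nhds (0 - 1)) :=
        (tendsto_const_div_atTop_nhds_zero_nat ((1:ℝ) + i)).sub_const 1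
      have h2 : Filter.Tendsto (fun m : ℕ => ((2:ℝ) + i)/(m:ℝ) - 4) Filter.atTop
          (nhds (0 - 4)) :=
        (tendsto_const_div_atTop_nhds_zero_nat ((2:ℝ) + i)).sub_const 4
      have h3 := h1.div h2 (by norm_num)
      have h4 : ((0:ℝ) - 1) / (0 - 4) = 1/4 := by norm_num
      rw [h4] at h3
      apply Filter.Tendsto.congr' _ h3
      filter_upwards [Filter.eventually_ge_atTop (i + 1)] with m hm
      have hmR : (i:ℝ) + 1 ≤ (m:ℝ) := by exact_mod_cast hm
      have hi0 : (0:ℝ) ≤ (i:ℝ) := Nat.cast_nonneg i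
      have hm0 : (m:ℝ) ≠ 0 := by
        have : m ≠ 0 := by omega
        exact_mod_cast this
      have e1 : (1 + (i:ℝ))/(m:ℝ) - 1 = (1 - (m:ℝ) + i)/(m:ℝ) := by
        field_simp [hm0]; ring
      have e2 : (2 + (i:ℝ))/(m:ℝ) - 4 = (2 - 4*(m:ℝ) + i)/(m:ℝ) := by
        field_simp [hm0]; ring
      show ((1 + (i:ℝ))/(m:ℝ) - 1) / ((2 + (i:ℝ))/(m:ℝ) - 4) = _
      rw [e1, e2, div_div_div_cancel_right₀ hm0]
    have hprod := tendsto_finset_prod (f := fun (i : ℕ) (m : ℕ) =>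
        (1 - (m:ℝ) + i) / (2 - 4*(m:ℝ) + i)) (x := Filter.atTop)
        (a := fun _ => (1/4 : ℝ)) (Finset.range k) (fun i _ => hfac i)
    rw [Finset.prod_const, Finset.card_range] at hprod
    have hfack : (0:ℝ) < (k.factorial : ℝ) := by positivity
    have hc := hprod.const_mul (poch (5/2) k * t ^ k / (k.factorial : ℝ))
    have hgk : poch (5/2) k * t ^ k / (k.factorial : ℝ) * (1/4 : ℝ) ^ k = g k := by
      simp only [hg_def]
      rw [div_pow, div_pow, one_pow]
      ring
    rw [hgk] at hc
    apply hc.congr'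
    filter_upwards [Filter.eventually_ge_atTop (k + 1)] with m hm
    have hdne : ∀ i : ℕ, i ∈ Finset.range k → (2 - 4*(m:ℝ) + i) ≠ 0 := by
      intro i hi
      have h1 : (i:ℝ) + 1 ≤ (m:ℝ) := by
        have : i + 1 ≤ m := by have := Finset.mem_range.1 hi; omega
        exact_mod_cast this
      have hi0 : (0:ℝ) ≤ (i:ℝ) := Nat.cast_nonneg i
      apply ne_of_lt; linarith
    have hC0 : poch (2 - 4*(m:ℝ)) k ≠ 0 := by
      rw [poch]
      exact Finset.prod_ne_zero_iff.2 hdne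
    have hsplit : ∏ i ∈ Finset.range k, ((1 - (m:ℝ) + i) / (2 - 4*(m:ℝ) + i)) =
        poch (1 - (m:ℝ)) k / poch (2 - 4*(m:ℝ)) k := by
      rw [poch, poch, Finset.prod_div_distrib]
    rw [hsplit]
    simp only [hfm_def]
    ring
  -- put everything together
  have key := tendsto_tsum_of_dominated_convergence hbd_sum hab h_bound
  have hFeq : ∀ᶠ m in Filter.atTop, (∑' k, fm m k) = F m t := by
    filter_upwards [Filter.eventually_ge_atTop 1] with m hm
    rw [tsum_eq_sum (s := Finset.range m) (fun k hk => by
      have hmk : m ≤ k := by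
        by_contra hcon
        exact hk (Finset.mem_range.2 (lt_of_not_ge hcon))
      simp only [hfm_def, hvanish m hm k hmk]
      simp)]
    rfl
  have final := key.congr' hFeq
  have hts : (∑' k, g k) = 32 / (4 - t) ^ ((5:ℝ)/2) := hg.tsum_eq.trans hval
  rwa [hts] at final
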